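/- arXiv:2306.00148 — 2 statements merged into one kernel-verified Lean document; each statement's English description precedes it below -/
import Mathlib

section
/- Let b : ℝⁿ → ℝ be continuously differentiable and let x : ℝ → ℝⁿ be a continuously differentiable trajectory. Suppose α : ℝ → ℝ is a locally Lipschitz, strictly increasing function with α(0) = 0 (extended class K), and for all t ≥ 0, d/dt b(x(t)) + α(b(x(t))) ≥ 0. If b(x(0)) ≥ 0, then b(x(t)) ≥ 0 for all t ≥ 0. -/
/-!
Wherever `b (x t) < 0` the condition gives `d/dt b (x t) ≥ -α (b (x t)) > 0`. If `b (x t) < 0`,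
let `t₀` be the last time before `t` at which `b ∘ x` is nonnegative: on `[t₀, t]` the function
is strictly increasing, so `b (x t) > b (x t₀) ≥ 0`, a contradiction.
-/

open Set

theorem nonneg_of_deriv_pos_of_neg {h : ℝ → ℝ} {a b : ℝ} (hcont : ContinuousOn h (Icc a b))
    (hderiv : ∀ s ∈ Ioo a b, h s < 0 → 0 < deriv h s) (ha : 0 ≤ h a) {t : ℝ}
    (ht : t ∈ Icc a b) : 0 ≤ h t := by
  by_contra! hneg
  set S := Icc a t ∩ h ⁻¹' Ici 0
  have hS_closed : IsClosed S :=
    (hcont.mono (Icc_subset_Icc_right ht.2)).preimage_isClosed_of_isClosed isClosed_Icc isClosed_Ici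
  have hS_bdd : BddAbove S := bddAbove_Icc.mono inter_subset_left
  obtain ⟨⟨ht₀a, ht₀t⟩, ht₀ : 0 ≤ h (sSup S)⟩ :=
    hS_closed.csSup_mem ⟨a, left_mem_Icc.2 ht.1, ha⟩ hS_bdd
  set t₀ := sSup S
  have hneg_after : ∀ s ∈ Ioc t₀ t, h s < 0 := fun s hs => by
    by_contra! hs_nonneg
    exact (le_csSup hS_bdd ⟨⟨ht₀a.trans hs.1.le, hs.2⟩, hs_nonneg⟩).not_gt hs.1
  have ht₀_lt : t₀ < t := ht₀t.lt_of_ne fun he => (he ▸ ht₀).not_gt hneg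
  have hmono : StrictMonoOn h (Icc t₀ t) := by
    refine strictMonoOn_of_deriv_pos (convex_Icc _ _) (hcont.mono (Icc_subset_Icc ht₀a ht.2)) ?_
    intro s hs
    rw [interior_Icc] at hs
    exact hderiv s ⟨ht₀a.trans_lt hs.1, hs.2.trans_le ht.2⟩ (hneg_after s ⟨hs.1, hs.2.le⟩)
  linarith [hmono (left_mem_Icc.2 ht₀t) (right_mem_Icc.2 ht₀t) ht₀_lt]

theorem nonneg_of_deriv_add_nonneg {h α : ℝ → ℝ} (hcont : ContinuousOn h (Ici 0))
    (hα : ∀ y < 0, α y < 0) (hcbf : ∀ t, 0 ≤ t → 0 ≤ deriv h t + α (h t)) (h0 : 0 ≤ h 0)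
    (t : ℝ) (ht : 0 ≤ t) : 0 ≤ h t :=
  nonneg_of_deriv_pos_of_neg (hcont.mono Icc_subset_Ici_self)
    (fun s hs hneg => by linarith [hα _ hneg, hcbf s hs.1.le]) h0 (right_mem_Icc.2 ht)

theorem stmt_1_general (n : ℕ) (b : EuclideanSpace ℝ (Fin n) → ℝ)
    (x : ℝ → EuclideanSpace ℝ (Fin n)) (α : ℝ → ℝ)
    (hb : ContDiff ℝ 1 b) (hx : ContDiff ℝ 1 x)
    (hαmono : StrictMono α) (hα0 : α 0 = 0)
    (hcbf : ∀ t : ℝ, 0 ≤ t → deriv (fun s => b (x s)) t + α (b (x t)) ≥ 0)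
    (h0 : b (x 0) ≥ 0) :
    ∀ t : ℝ, 0 ≤ t → b (x t) ≥ 0 :=
  nonneg_of_deriv_add_nonneg (hb.continuous.comp hx.continuous).continuousOn
    (fun _ hy => hα0 ▸ hαmono hy) hcbf h0

theorem stmt_1 (n : ℕ) (b : EuclideanSpace ℝ (Fin n) → ℝ)
    (x : ℝ → EuclideanSpace ℝ (Fin n)) (α : ℝ → ℝ)
    (hb : ContDiff ℝ 1 b) (hx : ContDiff ℝ 1 x)
    (hαlip : LocallyLipschitz α) (hαmono : StrictMono α) (hα0 : α 0 = 0)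
    (hcbf : ∀ t : ℝ, 0 ≤ t → deriv (fun s => b (x s)) t + α (b (x t)) ≥ 0)
    (h0 : b (x 0) ≥ 0) :
    ∀ t : ℝ, 0 ≤ t → b (x t) ≥ 0 :=
  stmt_1_general n b x α hb hx hαmono hα0 hcbf h0
end

section
/- Let α : ℝ → ℝ be strictly increasing with α(0) = 0, and let b, x, and the trajectory satisfy ḃ(t) ≥ -α(b(t)) with b(0) = b₀ > 0. Then b(t) > 0 for all t ≥ 0, assuming α is locally Lipschitz. -/
/-!
If `b` vanished somewhere on `[0, ∞)`, let `T > 0` be its first zero. As `α` is Lipschitz near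
`α 0 = 0`, on some interval `(t₁, T)` where `b` is positive and small we get
`b' ≥ -α(b) ≥ -K b`, so `b t * exp (K t)` is nondecreasing there, and
`0 < b t₁ * exp (K t₁) ≤ b T * exp (K T) = 0`.
-/

open Set Filter Topology Real

lemma LocallyLipschitz.exists_eventually_dist_le {X Y : Type*} [PseudoMetricSpace X]
    [PseudoMetricSpace Y] {f : X → Y} (hf : LocallyLipschitz f) (x : X) :
    ∃ K : ℝ, ∀ᶠ y in 𝓝 x, dist (f y) (f x) ≤ K * dist y x := by
  obtain ⟨K, U, hU, hlip⟩ := hf x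
  exact ⟨K, eventually_of_mem hU fun y hy => hlip.dist_le_mul y hy x (mem_of_mem_nhds hU)⟩

lemma exists_first_zero_of_pos {b : ℝ → ℝ} (hb : Continuous b) (hb0 : 0 < b 0) {t₀ : ℝ}
    (ht₀ : 0 ≤ t₀) (hbt₀ : b t₀ ≤ 0) :
    ∃ T, 0 < T ∧ b T = 0 ∧ ∀ t ∈ Ico 0 T, 0 < b t := by
  set S := {t ∈ Icc 0 t₀ | b t ≤ 0}
  have hS : IsCompact S := isCompact_Icc.inter_right (isClosed_le hb continuous_const)
  have hSne : S.Nonempty := ⟨t₀, ⟨ht₀, le_rfl⟩, hbt₀⟩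
  obtain ⟨⟨hT0, hTt₀⟩, hbT⟩ := hS.sInf_mem hSne
  have hpos : ∀ t ∈ Ico 0 (sInf S), 0 < b t := fun t ht => by
    by_contra! hbt
    exact (csInf_le hS.bddBelow ⟨⟨ht.1, ht.2.le.trans hTt₀⟩, hbt⟩).not_gt ht.2
  have hT : 0 < sInf S := hT0.lt_of_ne fun h => by rw [← h] at hbT; exact hbT.not_gt hb0
  obtain ⟨s, hs, hbs⟩ := intermediate_value_Icc' hT.le hb.continuousOn ⟨hbT, hb0.le⟩
  have hsT : s = sInf S :=
    le_antisymm hs.2 (csInf_le hS.bddBelow ⟨⟨hs.1, hs.2.trans hTt₀⟩, hbs.le⟩)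
  exact ⟨sInf S, hT, hsT ▸ hbs, hpos⟩

lemma monotoneOn_mul_exp_of_neg_mul_le_deriv {b : ℝ → ℝ} {K a c : ℝ}
    (hbc : ContinuousOn b (Icc a c)) (hbd : DifferentiableOn ℝ b (Ioo a c))
    (h : ∀ t ∈ Ioo a c, -(K * b t) ≤ deriv b t) :
    MonotoneOn (fun t => b t * exp (K * t)) (Icc a c) := by
  have hexp (t : ℝ) : HasDerivAt (fun t => exp (K * t)) (exp (K * t) * K) t := by
    simpa using ((hasDerivAt_id t).const_mul K).exp
  have hderiv : ∀ t ∈ Ioo a c,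
      HasDerivAt (fun t => b t * exp (K * t)) ((deriv b t + K * b t) * exp (K * t)) t := by
    intro t ht
    have hbt : HasDerivAt b (deriv b t) t :=
      ((hbd t ht).differentiableAt (isOpen_Ioo.mem_nhds ht)).hasDerivAt
    exact (hbt.mul (hexp t)).congr_deriv (by ring)
  refine monotoneOn_of_deriv_nonneg (convex_Icc a c)
    (hbc.mul (continuous_exp.comp (continuous_const_mul K)).continuousOn) ?_ ?_
  · rw [interior_Icc]
    exact fun t ht => (hderiv t ht).differentiableAt.differentiableWithinAt
  · rw [interior_Icc]
    intro t ht
    rw [(hderiv t ht).deriv]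
    exact mul_nonneg (by linarith [h t ht]) (exp_pos _).le

theorem stmt_12_general (b α : ℝ → ℝ) (b₀ : ℝ)
    (hb : ContDiff ℝ 1 b)
    (hαlip : LocallyLipschitz α) (hα0 : α 0 = 0)
    (hineq : ∀ t : ℝ, 0 ≤ t → deriv b t ≥ -α (b t))
    (hb0 : b 0 = b₀) (hb0pos : 0 < b₀) :
    ∀ t : ℝ, 0 ≤ t → 0 < b t := by
  by_contra! ⟨t₀, ht₀, hbt₀⟩
  obtain ⟨T, hT, hbT, hpos⟩ :=
    exists_first_zero_of_pos hb.continuous (hb0 ▸ hb0pos) ht₀ hbt₀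
  obtain ⟨K, hK⟩ := hαlip.exists_eventually_dist_le 0
  have hbα : ∀ᶠ t in 𝓝 T, dist (α (b t)) (α 0) ≤ K * dist (b t) 0 :=
    (hbT ▸ hb.continuous.tendsto T).eventually hK
  have hnear : ∀ᶠ t in 𝓝[<] T, 0 < b t ∧ -(K * b t) ≤ deriv b t := by
    filter_upwards [nhdsWithin_le_nhds hbα, nhdsWithin_le_nhds (Ioi_mem_nhds hT),
      self_mem_nhdsWithin] with t hαt (ht0 : 0 < t) (htT : t < T)
    have hbt := hpos t ⟨ht0.le, htT⟩
    rw [hα0, Real.dist_0_eq_abs, Real.dist_0_eq_abs, abs_of_pos hbt] at hαt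
    exact ⟨hbt, by linarith [hineq t ht0.le, le_abs_self (α (b t)), hαt]⟩
  obtain ⟨l, hlT, hl⟩ := mem_nhdsLT_iff_exists_Ioo_subset.mp hnear
  obtain ⟨t₁, hlt₁, ht₁T⟩ := nonempty_Ioo.mpr (max_lt hlT hT)
  have hmono := monotoneOn_mul_exp_of_neg_mul_le_deriv (K := K) hb.continuous.continuousOn
    (hb.differentiable one_ne_zero).differentiableOn
    fun t ht => (hl ⟨(le_max_left _ _).trans_lt (hlt₁.trans ht.1), ht.2⟩).2
  have hle := hmono (left_mem_Icc.mpr ht₁T.le) (right_mem_Icc.mpr ht₁T.le) ht₁T.le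
  have hbt₁ := hpos t₁ ⟨(le_max_right _ _).trans hlt₁.le, ht₁T⟩
  simp only [hbT, zero_mul] at hle
  exact hle.not_gt (mul_pos hbt₁ (exp_pos _))

theorem stmt_12 (b α : ℝ → ℝ) (b₀ : ℝ)
    (hb : ContDiff ℝ 1 b)
    (hαlip : LocallyLipschitz α) (hαmono : StrictMono α) (hα0 : α 0 = 0)
    (hineq : ∀ t : ℝ, 0 ≤ t → deriv b t ≥ -α (b t))
    (hb0 : b 0 = b₀) (hb0pos : 0 < b₀) :
    ∀ t : ℝ, 0 ≤ t → 0 < b t :=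
  stmt_12_general b α b₀ hb hαlip hα0 hineq hb0 hb0pos
end
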